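/- arXiv:1806.04679 — 2 statements merged into one kernel-verified Lean document; each statement's English description precedes it below -/
import Mathlib

section
/- q-telescoping identity: let 0 < q < 1, |x| < 1, let n be a positive integer and m a non-negative integer. Then Σ_{a = m+1}^{∞} (1/([a]_q - q^a x)) · q^{a n} f_q(a; x) f_q(n; x) / f_q(a + n; x) = (q^n / [n]_q) · q^{m n} f_q(m; x) f_q(n; x) / f_q(m + n; x). -/
open scoped ENNReal

noncomputable section

/-- Strictly increasing `r`-tuples of positive integers
`0 = m₀ < m₁ < ⋯ < m_r`. -/
def StrictTup (r : ℕ) : Type := {m : Fin r → ℕ // StrictMono m ∧ ∀ i, 0 < m i}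

/-- The `q`-integer `[m]_q = (1 - q^m)/(1 - q)`. -/
def qint (q : ℝ) (m : ℕ) : ℝ := (1 - q ^ m) / (1 - q)

/-- `f_q(m; x) = ∏_{h=1}^m ([h]_q - q^h x)` (empty product = 1). -/
def fq (q x : ℝ) (m : ℕ) : ℝ := ∏ h ∈ Finset.Icc 1 m, (qint q h - q ^ h * x)

/-- The last entry of a tuple, or `0` for the empty tuple (i.e. `m_r`, with `m_0 = 0`). -/
def lastOr0 {r : ℕ} (m : Fin r → ℕ) : ℕ :=
  if h : 0 < r then m ⟨r - 1, by omega⟩ else 0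

/-- The multiple zeta value `ζ(k) = ∑_{0<m₁<⋯<m_r} ∏ 1/m_i^{k_i}`, as a value in `[0,∞]`. -/
def mzeta (k : List ℕ) : ℝ≥0∞ :=
  ∑' m : StrictTup k.length, ∏ i, 1 / (m.1 i : ℝ≥0∞) ^ k.get i

/-- The `q`-multiple zeta value
`ζ_q(k) = ∑_{0<m₁<⋯<m_r} ∏ q^{(k_i-1)m_i}/[m_i]_q^{k_i}`, as a value in `[0,∞]`. -/
def qmzeta (q : ℝ) (k : List ℕ) : ℝ≥0∞ :=
  ∑' m : StrictTup k.length,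
    ENNReal.ofReal (∏ i, q ^ ((k.get i - 1) * m.1 i) / qint q (m.1 i) ^ k.get i)

/-- The summand `∏_i q^{(k_i-1)m_i} / (([m_i]_q - q^{m_i}x) [m_i]_q^{k_i-1})`. -/
def ZqTerm (q x : ℝ) (k : List ℕ) (m : Fin k.length → ℕ) : ℝ :=
  ∏ i, q ^ ((k.get i - 1) * m i) /
    ((qint q (m i) - q ^ (m i) * x) * qint q (m i) ^ (k.get i - 1))

/-- The connected sum `Z_q(k; l; x)`, as a value in `[0,∞]`. -/
def connSum (q x : ℝ) (k l : List ℕ) : ℝ≥0∞ :=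
  ∑' p : StrictTup k.length × StrictTup l.length,
    ENNReal.ofReal (ZqTerm q x k p.1.1 * ZqTerm q x l p.2.1 *
      (q ^ (lastOr0 p.1.1 * lastOr0 p.2.1) * fq q x (lastOr0 p.1.1) *
        fq q x (lastOr0 p.2.1) / fq q x (lastOr0 p.1.1 + lastOr0 p.2.1)))

/-- The one-variable generating series
`Z_q(k; x) = ∑_{0<m₁<⋯<m_r} ∏ q^{(k_i-1)m_i}/(([m_i]_q - q^{m_i}x)[m_i]_q^{k_i-1})`,
as a value in `[0,∞]`. -/
def Zq1 (q x : ℝ) (k : List ℕ) : ℝ≥0∞ :=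
  ∑' m : StrictTup k.length, ENNReal.ofReal (ZqTerm q x k m.1)

/-- The classical connected sum `Z(k; l)`, as a value in `[0,∞]`. -/
def connSumC (k l : List ℕ) : ℝ≥0∞ :=
  ∑' p : StrictTup k.length × StrictTup l.length,
    (∏ i, 1 / (p.1.1 i : ℝ≥0∞) ^ k.get i) * (∏ j, 1 / (p.2.1 j : ℝ≥0∞) ^ l.get j) *
      ((Nat.factorial (lastOr0 p.1.1) : ℝ≥0∞) * (Nat.factorial (lastOr0 p.2.1)) /
        (Nat.factorial (lastOr0 p.1.1 + lastOr0 p.2.1)))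

/-- The admissible index `({1}^{a₁-1}, b₁+1, …, {1}^{a_s-1}, b_s+1)` built from the
list of pairs `ab = [(a₁,b₁),…,(a_s,b_s)]`. -/
def indexFromAB (ab : List (ℕ × ℕ)) : List ℕ :=
  ab.flatMap fun p => List.replicate (p.1 - 1) 1 ++ [p.2 + 1]

/-- The dual index `({1}^{b_s-1}, a_s+1, …, {1}^{b₁-1}, a₁+1)` built from
`ab = [(a₁,b₁),…,(a_s,b_s)]`. -/
def dualFromAB (ab : List (ℕ × ℕ)) : List ℕ :=
  ab.reverse.flatMap fun p => List.replicate (p.2 - 1) 1 ++ [p.1 + 1]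


section QTel

variable {q x : ℝ}

lemma qtel_factor_ge (hq0 : 0 < q) (hq1 : q < 1) (hx : |x| < 1) {h : ℕ} (hh : 1 ≤ h) :
    1 - q ≤ qint q h - q ^ h * x := by
  have hq1' : (0:ℝ) < 1 - q := by linarith
  have hqh : q ^ h ≤ q := by
    calc q ^ h ≤ q ^ 1 := pow_le_pow_of_le_one (le_of_lt hq0) (le_of_lt hq1) hh
    _ = q := pow_one q
  have hqh0 : (0:ℝ) < q ^ h := pow_pos hq0 h
  have h1 : (1:ℝ) ≤ qint q h := by
    rw [qint, le_div_iff₀ hq1']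
    nlinarith
  have h2 : q ^ h * x ≤ q := by
    calc q ^ h * x ≤ q ^ h * |x| := by
          exact mul_le_mul_of_nonneg_left (le_abs_self x) (le_of_lt hqh0)
    _ ≤ q ^ h * 1 := by nlinarith [abs_nonneg x]
    _ = q ^ h := mul_one _
    _ ≤ q := hqh
  linarith

lemma qtel_factor_pos (hq0 : 0 < q) (hq1 : q < 1) (hx : |x| < 1) {h : ℕ} (hh : 1 ≤ h) :
    0 < qint q h - q ^ h * x := lt_of_lt_of_le (by linarith) (qtel_factor_ge hq0 hq1 hx hh)

lemma qtel_fq_pos (hq0 : 0 < q) (hq1 : q < 1) (hx : |x| < 1) (m : ℕ) : 0 < fq q x m := by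
  refine Finset.prod_pos fun h hh => ?_
  exact qtel_factor_pos hq0 hq1 hx (Finset.mem_Icc.mp hh).1

lemma qtel_fq_succ (m : ℕ) :
    fq q x (m + 1) = fq q x m * (qint q (m + 1) - q ^ (m + 1) * x) := by
  rw [fq, fq, Finset.prod_Icc_succ_top (by omega)]

lemma qtel_fq_lower (hq0 : 0 < q) (hq1 : q < 1) (hx : |x| < 1) (a n : ℕ) :
    fq q x a * (1 - q) ^ n ≤ fq q x (a + n) := by
  induction n with
  | zero => simp
  | succ n ih =>
    have h1 : 1 - q ≤ qint q (a + n + 1) - q ^ (a + n + 1) * x :=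
      qtel_factor_ge hq0 hq1 hx (by omega)
    have h2 : 0 ≤ fq q x a * (1 - q) ^ n := by
      have h3 := qtel_fq_pos hq0 hq1 hx (q := q) (x := x) a
      have h4 : (0:ℝ) < 1 - q := by linarith
      positivity
    calc fq q x a * (1 - q) ^ (n + 1) = fq q x a * (1 - q) ^ n * (1 - q) := by ring
    _ ≤ fq q x (a + n) * (qint q (a + n + 1) - q ^ (a + n + 1) * x) := by
        apply mul_le_mul ih h1 (by linarith) (le_of_lt (qtel_fq_pos hq0 hq1 hx _))
    _ = fq q x (a + n + 1) := (qtel_fq_succ (a + n)).symm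

lemma qtel_qint_pos (hq0 : 0 < q) (hq1 : q < 1) {n : ℕ} (hn : 0 < n) : 0 < qint q n := by
  have h1 : q ^ n < 1 := pow_lt_one₀ (le_of_lt hq0) hq1 (by omega)
  rw [qint]
  exact div_pos (by linarith) (by linarith)

lemma qtel_step (hq0 : 0 < q) (hq1 : q < 1) (hx : |x| < 1) {n : ℕ} (hn : 0 < n) (a : ℕ) :
    q ^ n / qint q n * (q ^ (a * n) * fq q x a * fq q x n / fq q x (a + n)) -
      q ^ n / qint q n * (q ^ ((a + 1) * n) * fq q x (a + 1) * fq q x n / fq q x (a + 1 + n)) =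
    1 / (qint q (a + 1) - q ^ (a + 1) * x) *
      (q ^ ((a + 1) * n) * fq q x (a + 1) * fq q x n / fq q x (a + 1 + n)) := by
  have hP : 0 < qint q (a + 1) - q ^ (a + 1) * x := qtel_factor_pos hq0 hq1 hx (by omega)
  have hPn : 0 < qint q (a + n + 1) - q ^ (a + n + 1) * x :=
    qtel_factor_pos hq0 hq1 hx (by omega)
  have hfan : 0 < fq q x (a + n) := qtel_fq_pos hq0 hq1 hx _
  have hqn : 0 < qint q n := qtel_qint_pos hq0 hq1 hn
  have hq1' : (1:ℝ) - q ≠ 0 := by intro h; nlinarith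
  have e1 : fq q x (a + 1) = fq q x a * (qint q (a + 1) - q ^ (a + 1) * x) := qtel_fq_succ a
  have e2 : fq q x (a + 1 + n) = fq q x (a + n) * (qint q (a + n + 1) - q ^ (a + n + 1) * x) := by
    rw [show a + 1 + n = a + n + 1 by omega]; exact qtel_fq_succ (a + n)
  -- key q-integer relation: [a+n+1]_q = [n]_q + q^n * [a+1]_q
  have e3 : qint q (a + n + 1) = qint q n + q ^ n * qint q (a + 1) := by
    rw [qint, qint, qint]
    field_simp
    ring
  have e3' : qint q (a + n + 1) - q ^ (a + n + 1) * x
      = qint q n + q ^ n * (qint q (a + 1) - q ^ (a + 1) * x) := by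
    rw [e3, show a + n + 1 = (a + 1) + n by omega, pow_add]
    ring
  rw [e1, e2, e3', show (a + 1) * n = a * n + n by ring, pow_add]
  have hB : (0:ℝ) < qint q n + q ^ n * (qint q (a + 1) - q ^ (a + 1) * x) := by
    have := pow_pos hq0 n
    positivity
  field_simp
  ring

lemma qtel_G_tendsto (hq0 : 0 < q) (hq1 : q < 1) (hx : |x| < 1) {n : ℕ} (hn : 0 < n) :
    Filter.Tendsto (fun a : ℕ =>
      q ^ n / qint q n * (q ^ (a * n) * fq q x a * fq q x n / fq q x (a + n)))
      Filter.atTop (nhds 0) := by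
  have hq1' : (0:ℝ) < 1 - q := by linarith
  have hC : 0 < q ^ n / qint q n * fq q x n / (1 - q) ^ n := by
    have := qtel_qint_pos hq0 hq1 hn (q := q)
    have := qtel_fq_pos hq0 hq1 hx (q := q) (x := x) n
    positivity
  apply squeeze_zero (g := fun a : ℕ => q ^ n / qint q n * fq q x n / (1 - q) ^ n * (q ^ n) ^ a)
  · intro a
    have := qtel_qint_pos hq0 hq1 hn (q := q)
    have := qtel_fq_pos hq0 hq1 hx (q := q) (x := x) a
    have := qtel_fq_pos hq0 hq1 hx (q := q) (x := x) n
    have := qtel_fq_pos hq0 hq1 hx (q := q) (x := x) (a + n)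
    positivity
  · intro a
    have hfa : 0 < fq q x a := qtel_fq_pos hq0 hq1 hx a
    have hfan : 0 < fq q x (a + n) := qtel_fq_pos hq0 hq1 hx _
    have hfn : 0 < fq q x n := qtel_fq_pos hq0 hq1 hx n
    have hqintn := qtel_qint_pos hq0 hq1 hn (q := q)
    have hratio : fq q x a / fq q x (a + n) ≤ 1 / (1 - q) ^ n := by
      rw [div_le_div_iff₀ hfan (by positivity)]
      calc fq q x a * (1 - q) ^ n ≤ fq q x (a + n) := qtel_fq_lower hq0 hq1 hx a n
      _ = 1 * fq q x (a + n) := (one_mul _).symm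
    have hpow : q ^ (a * n) = (q ^ n) ^ a := by rw [← pow_mul, Nat.mul_comm]
    have key : q ^ (a * n) * fq q x a * fq q x n / fq q x (a + n)
        = (q ^ n) ^ a * fq q x n * (fq q x a / fq q x (a + n)) := by
      rw [hpow]; ring
    rw [key]
    have h1 : (q ^ n) ^ a * fq q x n * (fq q x a / fq q x (a + n))
        ≤ (q ^ n) ^ a * fq q x n * (1 / (1 - q) ^ n) :=
      mul_le_mul_of_nonneg_left hratio (by positivity)
    calc q ^ n / qint q n * ((q ^ n) ^ a * fq q x n * (fq q x a / fq q x (a + n)))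
        ≤ q ^ n / qint q n * ((q ^ n) ^ a * fq q x n * (1 / (1 - q) ^ n)) :=
          mul_le_mul_of_nonneg_left h1 (by positivity)
      _ = q ^ n / qint q n * fq q x n / (1 - q) ^ n * (q ^ n) ^ a := by ring
  · have hqn1 : q ^ n < 1 := pow_lt_one₀ (le_of_lt hq0) hq1 (by omega)
    have := tendsto_pow_atTop_nhds_zero_of_lt_one (le_of_lt (pow_pos hq0 n)) hqn1
    simpa using this.const_mul (q ^ n / qint q n * fq q x n / (1 - q) ^ n)

end QTel

set_option maxHeartbeats 1000000 in
/-- **q-telescoping identity.**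
`∑_{a>m} 1/([a]_q - qᵃx) · qᵃⁿ f_q(a;x) f_q(n;x) / f_q(a+n;x)
  = qⁿ/[n]_q · q^{mn} f_q(m;x) f_q(n;x) / f_q(m+n;x)`. -/
theorem q_telescoping (q x : ℝ) (hq0 : 0 < q) (hq1 : q < 1) (hx : |x| < 1)
    (n : ℕ) (hn : 0 < n) (m : ℕ) :
    HasSum (fun j : ℕ =>
      1 / (qint q (m + 1 + j) - q ^ (m + 1 + j) * x) *
        (q ^ ((m + 1 + j) * n) * fq q x (m + 1 + j) * fq q x n / fq q x (m + 1 + j + n)))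
      (q ^ n / qint q n * (q ^ (m * n) * fq q x m * fq q x n / fq q x (m + n))) := by
  classical
  set G : ℕ → ℝ := fun a =>
    q ^ n / qint q n * (q ^ (a * n) * fq q x a * fq q x n / fq q x (a + n)) with hG
  have key : ∀ j : ℕ,
      1 / (qint q (m + 1 + j) - q ^ (m + 1 + j) * x) *
        (q ^ ((m + 1 + j) * n) * fq q x (m + 1 + j) * fq q x n / fq q x (m + 1 + j + n))
      = G (m + j) - G (m + j + 1) := by
    intro j
    have h := qtel_step hq0 hq1 hx hn (q := q) (x := x) (m + j)
    rw [show m + 1 + j = m + j + 1 by omega, show m + j + 1 + n = m + j + 1 + n from rfl]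
    exact h.symm
  have hnonneg : ∀ j : ℕ,
      0 ≤ 1 / (qint q (m + 1 + j) - q ^ (m + 1 + j) * x) *
        (q ^ ((m + 1 + j) * n) * fq q x (m + 1 + j) * fq q x n / fq q x (m + 1 + j + n)) := by
    intro j
    have hP := qtel_factor_pos hq0 hq1 hx (q := q) (x := x) (h := m + 1 + j) (by omega)
    have h1 := qtel_fq_pos hq0 hq1 hx (q := q) (x := x) (m + 1 + j)
    have h2 := qtel_fq_pos hq0 hq1 hx (q := q) (x := x) n
    have h3 := qtel_fq_pos hq0 hq1 hx (q := q) (x := x) (m + 1 + j + n)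
    positivity
  rw [hasSum_iff_tendsto_nat_of_nonneg hnonneg]
  have hsum : ∀ N : ℕ, ∑ j ∈ Finset.range N,
      (1 / (qint q (m + 1 + j) - q ^ (m + 1 + j) * x) *
        (q ^ ((m + 1 + j) * n) * fq q x (m + 1 + j) * fq q x n / fq q x (m + 1 + j + n)))
      = G m - G (m + N) := by
    intro N
    have : ∀ j ∈ Finset.range N,
        1 / (qint q (m + 1 + j) - q ^ (m + 1 + j) * x) *
          (q ^ ((m + 1 + j) * n) * fq q x (m + 1 + j) * fq q x n / fq q x (m + 1 + j + n))
        = (fun j => G (m + j)) j - (fun j => G (m + j)) (j + 1) := by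
      intro j _
      simpa [Nat.add_assoc] using key j
    rw [Finset.sum_congr rfl this, Finset.sum_range_sub' (fun j => G (m + j)) N]
    simp
  have hGlim : Filter.Tendsto (fun N : ℕ => G (m + N)) Filter.atTop (nhds 0) := by
    have h0 := qtel_G_tendsto hq0 hq1 hx hn (q := q) (x := x)
    have : Filter.Tendsto (fun N : ℕ => m + N) Filter.atTop Filter.atTop :=
      Filter.tendsto_atTop_mono (fun N => Nat.le_add_left N m) Filter.tendsto_id
    exact h0.comp this
  have : Filter.Tendsto (fun N : ℕ => G m - G (m + N)) Filter.atTop (nhds (G m - 0)) :=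
    Filter.Tendsto.sub tendsto_const_nhds hGlim
  simp only [sub_zero] at this
  have hfinal : Filter.Tendsto (fun N : ℕ => ∑ j ∈ Finset.range N,
      (1 / (qint q (m + 1 + j) - q ^ (m + 1 + j) * x) *
        (q ^ ((m + 1 + j) * n) * fq q x (m + 1 + j) * fq q x n / fq q x (m + 1 + j + n))))
      Filter.atTop (nhds (G m)) := by
    refine this.congr fun N => (hsum N).symm
  exact hfinal


end
end

section
/- q-telescoping step: let 0 < q < 1, |x| < 1, let n and a be positive integers. Then (1/([a]_q - q^a x)) · q^{a n} f_q(a; x) f_q(n; x) / f_q(a + n; x) = (q^n / [n]_q) · ( q^{(a-1)n} f_q(a-1; x) f_q(n; x) / f_q(a-1+n; x) − q^{a n} f_q(a; x) f_q(n; x) / f_q(a+n; x) ). -/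
open scoped ENNReal

noncomputable section

lemma qfactor_pos (q x : ℝ) (hq0 : 0 < q) (hq1 : q < 1) (hx : |x| < 1)
    {h : ℕ} (hh : 0 < h) : 0 < qint q h - q ^ h * x := by
  have hq1' : (0:ℝ) < 1 - q := by linarith
  have hqh : q ^ h ≤ q := by
    calc q ^ h ≤ q ^ 1 := pow_le_pow_of_le_one hq0.le hq1.le hh
    _ = q := pow_one q
  have hqhp : 0 < q ^ h := pow_pos hq0 h
  have h1 : 1 ≤ qint q h := by
    rw [qint, le_div_iff₀ hq1']
    nlinarith
  have h2 : q ^ h * x < q ^ h := by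
    nlinarith [abs_lt.mp hx]
  nlinarith

lemma fq_pos (q x : ℝ) (hq0 : 0 < q) (hq1 : q < 1) (hx : |x| < 1) (m : ℕ) :
    0 < fq q x m := by
  apply Finset.prod_pos
  intro h hh
  exact qfactor_pos q x hq0 hq1 hx (Finset.mem_Icc.mp hh).1

lemma fq_succ (q x : ℝ) (m : ℕ) :
    fq q x (m + 1) = fq q x m * (qint q (m + 1) - q ^ (m + 1) * x) := by
  rw [fq, fq, Finset.prod_Icc_succ_top (by omega)]

lemma qint_key (q x : ℝ) (hq1 : q < 1) (b n : ℕ) :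
    qint q (b + 1 + n) - q ^ (b + 1 + n) * x -
      q ^ n * (qint q (b + 1) - q ^ (b + 1) * x) = qint q n := by
  have h : (1:ℝ) - q ≠ 0 := by linarith
  rw [qint, qint, qint]
  field_simp
  ring

lemma aux_field (P Q F N G D1 D2 : ℝ) (h1 : D1 ≠ 0) (h2 : D2 ≠ 0) (hG : G ≠ 0)
    (h3 : D2 - Q * D1 ≠ 0) :
    1 / D1 * (P * Q * (F * D1) * N / (G * D2)) =
      Q / (D2 - Q * D1) * (P * F * N / G - P * Q * (F * D1) * N / (G * D2)) := by
  field_simp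
  have h3' : -(Q * D1) + D2 ≠ 0 := by rwa [neg_add_eq_sub]
  calc P * Q * F * N = P * Q * F * N * ((-(Q * D1) + D2) * (-(Q * D1) + D2)⁻¹) := by
        rw [mul_inv_cancel₀ h3', mul_one]
    _ = _ := by ring

/-- **q-telescoping step.** -/
theorem q_telescoping_step (q x : ℝ) (hq0 : 0 < q) (hq1 : q < 1) (hx : |x| < 1)
    (n a : ℕ) (hn : 0 < n) (ha : 0 < a) :
    1 / (qint q a - q ^ a * x) * (q ^ (a * n) * fq q x a * fq q x n / fq q x (a + n)) =
      q ^ n / qint q n *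
        (q ^ ((a - 1) * n) * fq q x (a - 1) * fq q x n / fq q x (a - 1 + n) -
          q ^ (a * n) * fq q x a * fq q x n / fq q x (a + n)) := by
  obtain ⟨b, rfl⟩ : ∃ b, a = b + 1 := ⟨a - 1, by omega⟩
  have hDa := qfactor_pos q x hq0 hq1 hx (h := b + 1) (by omega)
  have hDan := qfactor_pos q x hq0 hq1 hx (h := b + 1 + n) (by omega)
  have hfb := fq_pos q x hq0 hq1 hx b
  have hfn := fq_pos q x hq0 hq1 hx n
  have hfbn := fq_pos q x hq0 hq1 hx (b + n)
  have hqn : 0 < qint q n := by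
    have := qfactor_pos q x hq0 hq1 hx hn
    have := qfactor_pos q x hq0 hq1 hx hn
    rw [qint]
    have h1 : (0:ℝ) < 1 - q := by linarith
    have h2 : q ^ n < 1 := pow_lt_one₀ hq0.le hq1 hn.ne'
    exact div_pos (by linarith) h1
  have hkey := qint_key q x hq1 b n
  have e1 : fq q x (b + 1) = fq q x b * (qint q (b + 1) - q ^ (b + 1) * x) :=
    fq_succ q x b
  have e2 : fq q x (b + 1 + n) =
      fq q x (b + n) * (qint q (b + n + 1) - q ^ (b + n + 1) * x) := by
    rw [show b + 1 + n = (b + n) + 1 by omega]; exact fq_succ q x (b + n)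
  have e3 : b + 1 - 1 = b := by omega
  have e4 : (b + 1) * n = b * n + n := by ring
  have e5 : b + n + 1 = b + 1 + n := by omega
  have h6 : qint q (b + 1 + n) - q ^ (b + 1 + n) * x -
      q ^ n * (qint q (b + 1) - q ^ (b + 1) * x) ≠ 0 := by
    rw [hkey]; exact hqn.ne'
  rw [e3, e1, e2, e5, e4, show q ^ (b*n+n) = q^(b*n)*q^n from pow_add q (b*n) n, ← hkey]
  exact aux_field _ _ _ _ _ _ _ hDa.ne' hDan.ne' hfbn.ne' h6

end
end
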